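/- Fix L > 0 and α, β ∈ (0, L) with α + β ≤ L, and suppose F_l(α) = false and F_r(β) = false. Consider the multiset consisting of m ≥ 1 copies of I1 = [0, L), one copy of I2 = [α − L, α) and one copy of I3 = [L − β, 2L − β). Then opt of this multiset is 2, and for every ordering of the multiset whose first element is a copy of I1, the memoryless algorithm A_{F_l,F_r} ends with final solution exactly {[0, L)}, of cardinality 1. (This is the deterministic core of the lemma that if F_l(γ) = false for some γ > L/2 while F_r is false on overlaps at most L/2, the adversary forces competitive ratio 2 under random-order arrivals.) -/

import Mathlib

open scoped Classical

/-- An interval: a pair `(s, f)` of reals with `s < f`, identified with `[s, f) ⊆ ℝ`. -/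
structure Ivl where
  s : ℝ
  f : ℝ
  lt : s < f

namespace Ivl

noncomputable instance : DecidableEq Ivl := fun a b =>
  decidable_of_iff (a.s = b.s ∧ a.f = b.f) (by cases a; cases b; simp)

/-- The set of points covered by an interval. -/
def toSet (I : Ivl) : Set ℝ := Set.Ico I.s I.f

/-- The length of an interval. -/
def length (I : Ivl) : ℝ := I.f - I.s

/-- Two intervals conflict if their point sets intersect. -/
def Conflict (I J : Ivl) : Prop := (I.toSet ∩ J.toSet).Nonempty

/-- A finite set of intervals is feasible (pairwise disjoint) if no two distinct members
conflict. -/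
def Feasible (S : Finset Ivl) : Prop :=
  ∀ I ∈ S, ∀ J ∈ S, I ≠ J → ¬ Conflict I J

end Ivl

/-- `optM M` is the maximum cardinality of a pairwise-disjoint finite set of intervals all of
which occur in the multiset `M`. -/
noncomputable def optM (M : Multiset Ivl) : ℕ :=
  (M.toFinset.powerset.filter (fun T => Ivl.Feasible T)).sup Finset.card

/-- One step of the deterministic memoryless algorithm `A_{F_l, F_r}` on single-length
instances: on arrival of `I`, let `C` be the set of currently scheduled intervals conflicting
with `I`.  If `C = ∅`, take `I`.  If `C = {J}` and `I` overlaps `J` on the left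
(`I.s < J.s`, overlap `I.f - J.s`), replace `J` by `I` iff `F_l` of the overlap is `true`;
if `I` overlaps `J` on the right (`J.s < I.s`, overlap `J.f - I.s`), replace iff `F_r` of
the overlap is `true`.  In all other cases (identical interval, or two or more conflicts)
leave the solution unchanged. -/
noncomputable def memStep (Fl Fr : ℝ → Bool) (S : Finset Ivl) (I : Ivl) : Finset Ivl :=
  let C := S.filter (fun J => Ivl.Conflict J I)
  if C = ∅ then insert I S
  else if hC : ∃ J : Ivl, C = {J} then
    let J := hC.choose
    if I.s < J.s then (if Fl (I.f - J.s) then insert I (S.erase J) else S)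
    else if J.s < I.s then (if Fr (J.f - I.s) then insert I (S.erase J) else S)
    else S
  else S

/-- The memoryless algorithm `A_{F_l, F_r}` run on a list of arrivals. -/
noncomputable def memRun (Fl Fr : ℝ → Bool) (σ : List Ivl) : Finset Ivl :=
  σ.foldl (memStep Fl Fr) ∅

/-!
The interval `[0, L)` conflicts with both `[α - L, α)` and `[L - β, 2L - β)`, which are disjoint
from each other since `α + β ≤ L`; hence the optimum is `2`. Once the algorithm holds `[0, L)`
alone, a further copy of it is identical, `[α - L, α)` overlaps it on the left by `α` and
`[L - β, 2L - β)` overlaps it on the right by `β`, so `F_l α = F_r β = false` means no arrival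
ever changes the solution.
-/

namespace Ivl

theorem conflict_iff {I J : Ivl} : Conflict I J ↔ I.s < J.f ∧ J.s < I.f := by
  rw [Conflict, toSet, toSet, Set.Ico_inter_Ico, Set.nonempty_Ico, max_lt_iff, lt_min_iff,
    lt_min_iff]
  exact ⟨fun ⟨⟨_, h⟩, h', _⟩ => ⟨h, h'⟩, fun ⟨h, h'⟩ => ⟨⟨I.lt, h⟩, h', J.lt⟩⟩

theorem conflict_self (I : Ivl) : Conflict I I :=
  conflict_iff.2 ⟨I.lt, I.lt⟩

theorem Conflict.symm {I J : Ivl} (h : Conflict I J) : Conflict J I :=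
  conflict_iff.2 (conflict_iff.1 h).symm

theorem feasible_pair {I J : Ivl} (h : ¬ Conflict I J) : Feasible {I, J} := by
  intro A hA B hB hAB
  simp only [Finset.mem_insert, Finset.mem_singleton] at hA hB
  rcases hA with rfl | rfl <;> rcases hB with rfl | rfl
  exacts [absurd rfl hAB, h, fun h' => h h'.symm, absurd rfl hAB]

/-- If `A` conflicts with `B` and `C`, a feasible subset of `{A, B, C}` either is `{A}` or
avoids `A`. -/
theorem Feasible.card_le_two {T : Finset Ivl} {A B C : Ivl} (hT : Feasible T)
    (hsub : ∀ x ∈ T, x = A ∨ x = B ∨ x = C) (hB : Conflict A B) (hC : Conflict A C) :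
    T.card ≤ 2 := by
  by_cases hA : A ∈ T
  · have : T ⊆ {A} := fun x hx => by
      by_contra hxA
      rw [Finset.mem_singleton] at hxA
      rcases hsub x hx with rfl | rfl | rfl
      · exact hxA rfl
      · exact hT A hA x hx (Ne.symm hxA) hB
      · exact hT A hA x hx (Ne.symm hxA) hC
    exact (Finset.card_le_card this).trans (by simp)
  · have : T ⊆ {B, C} := fun x hx => by
      rcases hsub x hx with rfl | rfl | rfl
      · exact absurd hx hA
      all_goals simp
    exact (Finset.card_le_card this).trans Finset.card_le_two

end Ivl

theorem optM_le {M : Multiset Ivl} {k : ℕ}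
    (h : ∀ T ⊆ M.toFinset, Ivl.Feasible T → T.card ≤ k) : optM M ≤ k :=
  Finset.sup_le fun T hT => by
    rw [Finset.mem_filter, Finset.mem_powerset] at hT
    exact h T hT.1 hT.2

theorem card_le_optM {M : Multiset Ivl} {T : Finset Ivl} (hT : T ⊆ M.toFinset)
    (hF : Ivl.Feasible T) : T.card ≤ optM M :=
  Finset.le_sup (f := Finset.card) (Finset.mem_filter.2 ⟨Finset.mem_powerset.2 hT, hF⟩)

theorem optM_eq_two {M : Multiset Ivl} {A B C : Ivl} (hM : ∀ x ∈ M, x = A ∨ x = B ∨ x = C)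
    (hB : B ∈ M) (hC : C ∈ M) (hAB : Ivl.Conflict A B) (hAC : Ivl.Conflict A C)
    (hBC : ¬ Ivl.Conflict B C) : optM M = 2 := by
  refine le_antisymm (optM_le fun T hT hF => hF.card_le_two
    (fun x hx => hM x (Multiset.mem_toFinset.1 (hT hx))) hAB hAC) ?_
  have hne : B ≠ C := fun h => hBC (h ▸ Ivl.conflict_self B)
  rw [← Finset.card_pair hne]
  refine card_le_optM (fun x hx => ?_) (Ivl.feasible_pair hBC)
  rw [Finset.mem_insert, Finset.mem_singleton] at hx
  rcases hx with rfl | rfl <;> simpa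

section Algorithm

variable (Fl Fr : ℝ → Bool)

theorem memStep_empty (I : Ivl) : memStep Fl Fr ∅ I = {I} := by
  simp [memStep]

theorem memStep_singleton_of_conflict {J I : Ivl} (h : Ivl.Conflict J I) :
    memStep Fl Fr {J} I =
      if I.s < J.s ∧ Fl (I.f - J.s) ∨ J.s < I.s ∧ Fr (J.f - I.s) then {I} else {J} := by
  have hC : ({J} : Finset Ivl).filter (fun K => Ivl.Conflict K I) = {J} := by
    rw [Finset.filter_singleton, if_pos h]
  have hex : ∃ K : Ivl, ({J} : Finset Ivl) = {K} := ⟨J, rfl⟩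
  have hJ : hex.choose = J := (Finset.singleton_inj.1 hex.choose_spec).symm
  have hswap : insert I (({J} : Finset Ivl).erase J) = {I} := by simp
  simp only [memStep, hC, Finset.singleton_ne_empty, if_false, dif_pos hex, hJ, hswap]
  rcases lt_trichotomy I.s J.s with hlt | heq | hgt
  · simp [hlt, hlt.not_gt]
  · simp [heq]
  · simp [hgt, hgt.not_gt]

theorem memStep_singleton_eq_self {J I : Ivl} (h : Ivl.Conflict J I)
    (hl : I.s < J.s → Fl (I.f - J.s) = false) (hr : J.s < I.s → Fr (J.f - I.s) = false) :
    memStep Fl Fr {J} I = {J} := by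
  rw [memStep_singleton_of_conflict _ _ h, if_neg]
  rintro (⟨hlt, hF⟩ | ⟨hlt, hF⟩)
  · simp [hl hlt] at hF
  · simp [hr hlt] at hF

theorem memRun_cons_eq_singleton {J : Ivl} {σ : List Ivl}
    (hσ : ∀ I ∈ σ, memStep Fl Fr {J} I = {J}) : memRun Fl Fr (J :: σ) = {J} := by
  rw [memRun, List.foldl_cons, memStep_empty]
  induction σ with
  | nil => rfl
  | cons I σ ih =>
    rw [List.foldl_cons, hσ I List.mem_cons_self]
    exact ih fun K hK => hσ K (List.mem_cons_of_mem I hK)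

end Algorithm

theorem memoryless_reject_both_bad_instance_general (Fl Fr : ℝ → Bool) (L α β : ℝ)
    (hα : α ∈ Set.Ioo 0 L) (hβ : β ∈ Set.Ioo 0 L) (hαβ : α + β ≤ L)
    (hFl : Fl α = false) (hFr : Fr β = false)
    (m : ℕ)
    (I1 I2 I3 : Ivl) (hI1 : I1.s = 0 ∧ I1.f = L) (hI2 : I2.s = α - L ∧ I2.f = α)
    (hI3 : I3.s = L - β ∧ I3.f = 2 * L - β) :
    optM (Multiset.replicate m I1 + {I2, I3}) = 2 ∧
      ∀ σ : List Ivl, (σ : Multiset Ivl) = Multiset.replicate m I1 + {I2, I3} →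
        σ.head? = some I1 →
        memRun Fl Fr σ = {I1} := by
  obtain ⟨hα0, hαL⟩ := hα
  obtain ⟨hβ0, hβL⟩ := hβ
  have c12 : Ivl.Conflict I1 I2 := Ivl.conflict_iff.2 (by constructor <;> linarith)
  have c13 : Ivl.Conflict I1 I3 := Ivl.conflict_iff.2 (by constructor <;> linarith)
  have n23 : ¬ Ivl.Conflict I2 I3 := fun h => by linarith [(Ivl.conflict_iff.1 h).2]
  have hM : ∀ x ∈ Multiset.replicate m I1 + {I2, I3}, x = I1 ∨ x = I2 ∨ x = I3 := by
    intro x hx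
    simp only [Multiset.mem_add, Multiset.mem_replicate, Multiset.insert_eq_cons,
      Multiset.mem_cons, Multiset.mem_singleton] at hx
    tauto
  refine ⟨optM_eq_two hM (by simp) (by simp) c12 c13 n23, ?_⟩
  rintro (_ | ⟨_, σ⟩) hσ ⟨⟩
  refine memRun_cons_eq_singleton Fl Fr fun x hx => ?_
  rcases hM x (hσ ▸ Multiset.mem_coe.2 (List.mem_cons_of_mem _ hx)) with rfl | rfl | rfl
  · exact memStep_singleton_eq_self _ _ (Ivl.conflict_self x) (absurd · (lt_irrefl _))
      (absurd · (lt_irrefl _))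
  · refine memStep_singleton_eq_self _ _ c12 (fun _ => ?_) (fun h => by linarith [hI1.1, hI2.1])
    rwa [hI2.2, hI1.1, sub_zero]
  · refine memStep_singleton_eq_self _ _ c13 (fun h => by linarith [hI1.1, hI3.1]) (fun _ => ?_)
    rwa [hI1.2, hI3.1, sub_sub_cancel]

/-- Deterministic core of the random-order lower bound when `F_l α = false` and
`F_r β = false`: for the multiset of `m` copies of `I1 = [0, L)` plus `I2 = [α - L, α)` and
`I3 = [L - β, 2L - β)` (with `α, β ∈ (0, L)`, `α + β ≤ L`), the optimum is `2`, while on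
every arrival order starting with a copy of `I1` the memoryless algorithm `A_{F_l, F_r}`
ends with the single interval `I1`. -/
theorem memoryless_reject_both_bad_instance (Fl Fr : ℝ → Bool) (L α β : ℝ) (hL : 0 < L)
    (hα : α ∈ Set.Ioo 0 L) (hβ : β ∈ Set.Ioo 0 L) (hαβ : α + β ≤ L)
    (hFl : Fl α = false) (hFr : Fr β = false)
    (m : ℕ) (hm : 1 ≤ m)
    (I1 I2 I3 : Ivl) (hI1 : I1.s = 0 ∧ I1.f = L) (hI2 : I2.s = α - L ∧ I2.f = α)
    (hI3 : I3.s = L - β ∧ I3.f = 2 * L - β) :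
    optM (Multiset.replicate m I1 + {I2, I3}) = 2 ∧
      ∀ σ : List Ivl, (σ : Multiset Ivl) = Multiset.replicate m I1 + {I2, I3} →
        σ.head? = some I1 →
        memRun Fl Fr σ = {I1} :=
  memoryless_reject_both_bad_instance_general Fl Fr L α β hα hβ hαβ hFl hFr m I1 I2 I3 hI1 hI2 hI3
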